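/- arXiv:2412.00675 — 5 statements merged into one kernel-verified Lean document; each statement's English description precedes it below -/
import Mathlib

section
/- If A and B are symmetric positive semidefinite n×n real matrices, then det(A)·det(B) ≤ (trace(AB)/n)^n. -/
open Finset

lemma trace_eq_sum_eigenvalues' {m : Type*} [Fintype m] [DecidableEq m]
    {M : Matrix m m ℝ} (hM : M.IsHermitian) :
    M.trace = ∑ i, hM.eigenvalues i := by
  simpa using hM.trace_eq_sum_eigenvalues

lemma amgm_det_trace {m : Type*} [Fintype m] [DecidableEq m] (hcard : 0 < Fintype.card m)
    {M : Matrix m m ℝ} (hM : M.PosSemidef) :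
    M.det ≤ (M.trace / Fintype.card m) ^ (Fintype.card m) := by
  set N := Fintype.card m with hN
  have hμ := hM.eigenvalues_nonneg
  have hdet : M.det = ∏ i, hM.1.eigenvalues i := by
    simpa using hM.1.det_eq_prod_eigenvalues
  have htr : M.trace = ∑ i, hM.1.eigenvalues i := trace_eq_sum_eigenvalues' hM.1
  rw [hdet, htr]
  have hNne : (N : ℝ) ≠ 0 := Nat.cast_ne_zero.mpr hcard.ne'
  have key := Real.geom_mean_le_arith_mean_weighted univ (fun _ => 1 / (N : ℝ))
    (fun i => hM.1.eigenvalues i) (fun i _ => by positivity)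
    (by simp [hN, mul_comm, Finset.card_univ]; exact div_self (Nat.cast_ne_zero.mpr hcard.ne')) (fun i _ => hμ i)
  have h1 : ∏ i, hM.1.eigenvalues i
      = (∏ i, hM.1.eigenvalues i ^ ((1 : ℝ) / N)) ^ N := by
    rw [← Finset.prod_pow]
    congr 1; ext i
    rw [← Real.rpow_natCast (hM.1.eigenvalues i ^ ((1:ℝ)/N)), ← Real.rpow_mul (hμ i)]
    field_simp
    simp
  rw [h1]
  have h2 : ∑ i, hM.1.eigenvalues i / N = (∑ i, hM.1.eigenvalues i) / N := by
    rw [Finset.sum_div]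
  calc (∏ i, hM.1.eigenvalues i ^ ((1 : ℝ) / N)) ^ N
      ≤ (∑ i, (1 / (N:ℝ)) * hM.1.eigenvalues i) ^ N := by
        apply pow_le_pow_left₀ _ key
        exact Finset.prod_nonneg fun i _ => Real.rpow_nonneg (hμ i) _
    _ = ((∑ i, hM.1.eigenvalues i) / N) ^ N := by
        congr 1
        rw [← h2]; congr 1; ext i; ring

section PsdSqrt
open scoped MatrixOrder

noncomputable def psdSqrt {n : ℕ} (A : Matrix (Fin n) (Fin n) ℝ) : Matrix (Fin n) (Fin n) ℝ :=
  CFC.sqrt A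

lemma psdSqrt_posSemidef {n : ℕ} {A : Matrix (Fin n) (Fin n) ℝ} (hA : A.PosSemidef) :
    (psdSqrt A).PosSemidef :=
  Matrix.nonneg_iff_posSemidef.mp (CFC.sqrt_nonneg A)

lemma psdSqrt_mul_self {n : ℕ} {A : Matrix (Fin n) (Fin n) ℝ} (hA : A.PosSemidef) :
    psdSqrt A * psdSqrt A = A :=
  CFC.sqrt_mul_sqrt_self A hA.nonneg

end PsdSqrt

/-- For symmetric positive semidefinite matrices, det(A)·det(B) ≤ (trace(AB)/n)ⁿ. -/
theorem stmt_3 (n : ℕ) (hn : 0 < n) (A B : Matrix (Fin n) (Fin n) ℝ)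
    (hA : A.PosSemidef) (hB : B.PosSemidef) :
    A.det * B.det ≤ ((A * B).trace / n) ^ n := by
  set S := psdSqrt A with hS
  have hSh : S.IsHermitian := (psdSqrt_posSemidef hA).1
  have hM : (S * B * S).PosSemidef := by
    have := hB.mul_mul_conjTranspose_same S
    rwa [hSh.eq] at this
  have hdet : (S * B * S).det = A.det * B.det := by
    rw [Matrix.det_mul, Matrix.det_mul, ← psdSqrt_mul_self hA, Matrix.det_mul]
    ring
  have htr : (S * B * S).trace = (A * B).trace := by
    rw [Matrix.trace_mul_comm, ← mul_assoc, psdSqrt_mul_self hA]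
  have := amgm_det_trace (m := Fin n) (by simpa using hn) hM
  simp only [Fintype.card_fin] at this
  rw [hdet, htr] at this
  exact this
end

section
/- Define δ(ρ) = (1/ρ²)·[(s₀+ρ)^{2−ν} − s₀^{2−ν}]·[(s₀+ρ)^ν − (max(s₀−ρ,0))^ν] for s₀ ≥ 0, 0 < ρ ≤ 1, 0 < ν < 1. Then δ(ρ) ≤ C(ν) for a constant C(ν) depending only on ν, uniformly in s₀ and ρ. (In particular δ(ρ) ≤ 9/ρ²·ρ² = 9 type bound when s₀ ≤ 2ρ, and a mean-value bound when s₀ > 2ρ.) -/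
open Real

lemma aux_convex {a b q : ℝ} (hb : 0 ≤ b) (hba : b ≤ a) (ha : 0 < a) (hq : 1 ≤ q) :
    a ^ q - b ^ q ≤ q * a ^ (q - 1) * (a - b) := by
  have h0 : 0 ≤ b / a := div_nonneg hb ha.le
  have ht : (-1 : ℝ) ≤ b / a - 1 := by linarith
  have hber := one_add_mul_self_le_rpow_one_add ht hq
  rw [add_sub_cancel] at hber
  rw [Real.div_rpow hb ha.le] at hber
  have haq : 0 < a ^ q := Real.rpow_pos_of_pos ha q
  have h2 : (1 + q * (b / a - 1)) * a ^ q ≤ b ^ q := (le_div_iff₀ haq).mp hber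
  have e1 : a ^ (q - 1) * a = a ^ q := by
    rw [Real.rpow_sub_one ha.ne' q]; field_simp
  have e2 : a ^ q * (b / a) = a ^ (q - 1) * b := by
    rw [Real.rpow_sub_one ha.ne' q]; field_simp
  nlinarith [e1, e2, h2]

lemma aux_concave {c d p : ℝ} (hd : 0 < d) (hdc : d ≤ c) (hp0 : 0 ≤ p) (hp1 : p ≤ 1) :
    c ^ p - d ^ p ≤ p * d ^ (p - 1) * (c - d) := by
  have ht : (-1 : ℝ) ≤ c / d - 1 := by
    have : 0 ≤ c / d := div_nonneg (hd.le.trans hdc) hd.le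
    linarith
  have hber := rpow_one_add_le_one_add_mul_self ht hp0 hp1
  rw [add_sub_cancel] at hber
  rw [Real.div_rpow (hd.le.trans hdc) hd.le] at hber
  have hdp : 0 < d ^ p := Real.rpow_pos_of_pos hd p
  have h2 : c ^ p ≤ (1 + p * (c / d - 1)) * d ^ p := by
    rw [div_le_iff₀ hdp] at hber; linarith
  have e1 : d ^ (p - 1) * d = d ^ p := by
    rw [Real.rpow_sub_one hd.ne' p]; field_simp
  have e2 : d ^ p * (c / d) = d ^ (p - 1) * c := by
    rw [Real.rpow_sub_one hd.ne' p]; field_simp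
  nlinarith [e1, e2, h2]

/-- δ(ρ) = (1/ρ²)·[(s₀+ρ)^{2−ν}−s₀^{2−ν}]·[(s₀+ρ)^ν−(max(s₀−ρ,0))^ν] is bounded by a
constant depending only on ν, uniformly in s₀ ≥ 0 and 0 < ρ ≤ 1. -/
theorem stmt_6 (ν : ℝ) (hν0 : 0 < ν) (hν1 : ν < 1) :
    ∃ C : ℝ, 0 < C ∧ ∀ s₀ ρ : ℝ, 0 ≤ s₀ → 0 < ρ → ρ ≤ 1 →
      (1/ρ^2) * ((s₀ + ρ) ^ (2 - ν) - s₀ ^ (2 - ν)) *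
        ((s₀ + ρ) ^ ν - (max (s₀ - ρ) 0) ^ ν) ≤ C := by
  refine ⟨27, by norm_num, fun s₀ ρ hs hρ hρ1 => ?_⟩
  have hρ2 : (0:ℝ) < ρ^2 := by positivity
  have hsum : 0 < s₀ + ρ := by linarith
  have hm0 : 0 ≤ max (s₀ - ρ) 0 := le_max_right _ _
  have hm : max (s₀ - ρ) 0 ≤ s₀ + ρ := by
    apply max_le <;> linarith
  have hf2nn : 0 ≤ (s₀ + ρ) ^ ν - (max (s₀ - ρ) 0) ^ ν :=
    sub_nonneg.mpr (Real.rpow_le_rpow hm0 hm hν0.le)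
  have hf1nn : 0 ≤ (s₀ + ρ) ^ (2 - ν) - s₀ ^ (2 - ν) :=
    sub_nonneg.mpr (Real.rpow_le_rpow hs (by linarith) (by linarith))
  rw [mul_assoc]
  rw [one_div, ← div_eq_inv_mul, div_le_iff₀ hρ2]
  rcases le_or_gt s₀ (2*ρ) with hcase | hcase
  · -- small s₀ : bound by (3ρ)^(2-ν) * (3ρ)^ν = 9ρ²
    have h3ρ : (0:ℝ) < 3*ρ := by linarith
    have b1 : (s₀ + ρ) ^ (2 - ν) - s₀ ^ (2 - ν) ≤ (3*ρ) ^ (2 - ν) := by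
      have : (s₀ + ρ) ^ (2 - ν) ≤ (3*ρ) ^ (2 - ν) :=
        Real.rpow_le_rpow hsum.le (by linarith) (by linarith)
      nlinarith [Real.rpow_nonneg hs (2 - ν)]
    have b2 : (s₀ + ρ) ^ ν - (max (s₀ - ρ) 0) ^ ν ≤ (3*ρ) ^ ν := by
      have : (s₀ + ρ) ^ ν ≤ (3*ρ) ^ ν :=
        Real.rpow_le_rpow hsum.le (by linarith) hν0.le
      nlinarith [Real.rpow_nonneg hm0 ν]
    have hmul : ((s₀ + ρ) ^ (2 - ν) - s₀ ^ (2 - ν)) *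
        ((s₀ + ρ) ^ ν - (max (s₀ - ρ) 0) ^ ν) ≤ (3*ρ) ^ (2 - ν) * (3*ρ) ^ ν :=
      mul_le_mul b1 b2 hf2nn (Real.rpow_nonneg h3ρ.le _)
    have heq : (3*ρ) ^ (2 - ν) * (3*ρ) ^ ν = 9 * ρ^2 := by
      rw [← Real.rpow_add h3ρ]
      norm_num
      ring
    calc _ ≤ (3*ρ) ^ (2 - ν) * (3*ρ) ^ ν := hmul
    _ = 9 * ρ^2 := heq
    _ ≤ 27 * ρ^2 := by nlinarith
  · -- large s₀ : mean value bounds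
    have hd : 0 < s₀ - ρ := by linarith
    have hmax : max (s₀ - ρ) 0 = s₀ - ρ := max_eq_left hd.le
    have b1 : (s₀ + ρ) ^ (2 - ν) - s₀ ^ (2 - ν) ≤ 2 * (s₀ + ρ) ^ (1 - ν) * ρ := by
      have := aux_convex hs (by linarith : s₀ ≤ s₀ + ρ) hsum (by linarith : (1:ℝ) ≤ 2 - ν)
      have e : (2 - ν) - 1 = 1 - ν := by ring
      rw [e] at this
      have hpos : 0 ≤ (s₀ + ρ) ^ (1 - ν) := Real.rpow_nonneg hsum.le _
      nlinarith
    have b2 : (s₀ + ρ) ^ ν - (max (s₀ - ρ) 0) ^ ν ≤ ν * (s₀ - ρ) ^ (ν - 1) * (2*ρ) := by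
      rw [hmax]
      have := aux_concave hd (by linarith : s₀ - ρ ≤ s₀ + ρ) hν0.le hν1.le
      have hpos : 0 ≤ (s₀ - ρ) ^ (ν - 1) := Real.rpow_nonneg hd.le _
      nlinarith
    have b3 : (s₀ - ρ) ^ (ν - 1) ≤ 3 * (s₀ + ρ) ^ (ν - 1) := by
      have h13 : (s₀ + ρ)/3 ≤ s₀ - ρ := by linarith
      have h13pos : 0 < (s₀ + ρ)/3 := by positivity
      have step1 : (s₀ - ρ) ^ (ν - 1) ≤ ((s₀ + ρ)/3) ^ (ν - 1) :=
        Real.rpow_le_rpow_of_nonpos h13pos h13 (by linarith)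
      have step2 : ((s₀ + ρ)/3) ^ (ν - 1) = (s₀ + ρ) ^ (ν - 1) * 3 ^ (1 - ν) := by
        rw [Real.div_rpow hsum.le (by norm_num)]
        rw [div_eq_mul_inv, ← Real.rpow_neg (by norm_num : (0:ℝ) ≤ 3)]
        norm_num
      have step3 : (3:ℝ) ^ (1 - ν) ≤ 3 := by
        nth_rewrite 2 [show (3:ℝ) = 3 ^ (1:ℝ) by norm_num]
        exact Real.rpow_le_rpow_of_exponent_le (by norm_num) (by linarith)
      refine step1.trans ?_
      rw [step2]
      have : 0 ≤ (s₀ + ρ) ^ (ν - 1) := Real.rpow_nonneg hsum.le _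
      nlinarith
    have hmul : ((s₀ + ρ) ^ (2 - ν) - s₀ ^ (2 - ν)) *
        ((s₀ + ρ) ^ ν - (max (s₀ - ρ) 0) ^ ν)
        ≤ (2 * (s₀ + ρ) ^ (1 - ν) * ρ) * (ν * (s₀ - ρ) ^ (ν - 1) * (2*ρ)) := by
      apply mul_le_mul b1 b2 hf2nn
      positivity
    have key : (s₀ + ρ) ^ (1 - ν) * (s₀ + ρ) ^ (ν - 1) = 1 := by
      rw [← Real.rpow_add hsum]
      norm_num
    calc _ ≤ (2 * (s₀ + ρ) ^ (1 - ν) * ρ) * (ν * (s₀ - ρ) ^ (ν - 1) * (2*ρ)) := hmul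
    _ ≤ (2 * (s₀ + ρ) ^ (1 - ν) * ρ) * (ν * (3 * (s₀ + ρ) ^ (ν - 1)) * (2*ρ)) := by
        have h1 : 0 ≤ 2 * (s₀ + ρ) ^ (1 - ν) * ρ := by positivity
        have h2 : ν * (s₀ - ρ) ^ (ν - 1) * (2*ρ) ≤ ν * (3 * (s₀ + ρ) ^ (ν - 1)) * (2*ρ) := by
          apply mul_le_mul_of_nonneg_right _ (by linarith)
          exact mul_le_mul_of_nonneg_left b3 hν0.le
        exact mul_le_mul_of_nonneg_left h2 h1
    _ = 12 * ν * ρ^2 * ((s₀ + ρ) ^ (1 - ν) * (s₀ + ρ) ^ (ν - 1)) := by ring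
    _ = 12 * ν * ρ^2 := by rw [key]; ring
    _ ≤ 27 * ρ^2 := by nlinarith
end

section
/- For any v > 0 there exist constants b > 0, c > 0 and C < ∞ such that the function φ(x,y) = 1/[(x + b·|y|²)·|y|²], where |y|² = Σ_{i=2}^n y_i², satisfies the differential inequality x φ_{xx} + Σ_{i=2}^n φ_{y_iy_i} + v φ_x + c φ^{3/2} < C x φ² at every point with x ≥ 0 and 0 < y_i < 2 for all i (and |y| > 0). -/
set_option maxHeartbeats 1000000

lemma deriv2_inv {G dG d2G : ℝ → ℝ} (hG : ∀ r, HasDerivAt G (dG r) r)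
    (hdG : ∀ r, HasDerivAt dG (d2G r) r) {t : ℝ} (ht : G t ≠ 0) :
    deriv (deriv (fun r => (G r)⁻¹)) t = (2*(dG t)^2 - d2G t * G t)/(G t)^3 := by
  have hGc : Continuous G := (Differentiable.continuous fun x => (hG x).differentiableAt)
  have hev : ∀ᶠ r in nhds t, G r ≠ 0 := hGc.continuousAt.eventually_ne ht
  have h1 : deriv (fun r => (G r)⁻¹) =ᶠ[nhds t] fun r => -dG r / (G r)^2 :=
    hev.mono fun r hr => ((hG r).inv hr).deriv
  rw [h1.deriv_eq]
  have hd : HasDerivAt (fun r => (G r)^2) (2*G t*dG t) t := by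
    simpa [mul_comm, mul_assoc] using (hG t).fun_pow 2
  have hq : HasDerivAt (fun r => -dG r / (G r)^2)
      ((-d2G t * (G t)^2 - (-dG t) * (2*G t*dG t))/((G t)^2)^2) t :=
    ((hdG t).neg).div hd (pow_ne_zero 2 ht)
  rw [hq.deriv]
  field_simp
  ring

/-- Barrier inequality: for any v > 0 there are b, c > 0 and C such that
φ = 1/[(x+b|y|²)|y|²] satisfies x φ_xx + Σ φ_{y_iy_i} + v φ_x + c φ^{3/2} < C x φ². -/
theorem stmt_8 (n : ℕ) (hn : 2 ≤ n) (v : ℝ) (hv : 0 < v) :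
    ∃ b c C : ℝ, 0 < b ∧ 0 < c ∧
      ∀ (x : ℝ) (y : Fin (n-1) → ℝ), 0 ≤ x → (∀ i, 0 < y i ∧ y i < 2) →
        0 < ∑ i, (y i)^2 →
        x * deriv (deriv (fun x' => 1 / ((x' + b * ∑ i, (y i)^2) * ∑ i, (y i)^2))) x
          + (∑ j, deriv (deriv (fun r =>
              1 / ((x + b * ∑ i, (Function.update y j r i)^2) *
                ∑ i, (Function.update y j r i)^2))) (y j))
          + v * deriv (fun x' => 1 / ((x' + b * ∑ i, (y i)^2) * ∑ i, (y i)^2)) x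
          + c * (1 / ((x + b * ∑ i, (y i)^2) * ∑ i, (y i)^2)) ^ ((3:ℝ)/2)
        < C * x * (1 / ((x + b * ∑ i, (y i)^2) * ∑ i, (y i)^2)) ^ 2 := by
  set b : ℝ := v/(40+v) with hb_def
  have hb : 0 < b := div_pos hv (by linarith)
  set sb : ℝ := Real.sqrt b with hsb_def
  have hsb : 0 < sb := Real.sqrt_pos.mpr hb
  have hsb2 : sb^2 = b := Real.sq_sqrt hb.le
  set c : ℝ := v * sb / 8 with hc_def
  have hc : 0 < c := by positivity
  set C : ℝ := 24 + 3*v/8 + 2/b with hC_def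
  refine ⟨b, c, C, hb, hc, ?_⟩
  intro x y hx hy hspos
  set s : ℝ := ∑ i, (y i)^2 with hs_def
  have hA : 0 < x + b * s := by positivity
  have hP : 0 < (x + b * s) * s := mul_pos hA hspos
  have hPne : (x + b * s) * s ≠ 0 := hP.ne'
  simp only [one_div]
  -- x-derivatives
  have hGx : ∀ x' : ℝ, HasDerivAt (fun x' => (x' + b * s) * s) s x' := by
    intro x'
    simpa using ((hasDerivAt_id x').add_const (b*s)).mul_const s
  have e2 : deriv (deriv (fun x' => ((x' + b * s) * s)⁻¹)) x
      = (2*s^2 - 0 * ((x + b*s)*s))/((x + b*s)*s)^3 := by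
    exact deriv2_inv hGx (fun r => hasDerivAt_const r s) hPne
  have e1 : deriv (fun x' => ((x' + b * s) * s)⁻¹) x = -s / ((x + b*s)*s)^2 :=
    ((hGx x).inv hPne).deriv
  -- sum rewrite for update
  have hupd : ∀ (j : Fin (n-1)) (r : ℝ),
      ∑ i, (Function.update y j r i)^2 = s - (y j)^2 + r^2 := by
    intro j r
    have h1 : ∀ i, (Function.update y j r i)^2
        = Function.update (fun i => (y i)^2) j (r^2) i := by
      intro i
      exact Function.apply_update (fun _ t => t^2) y j r i
    simp only [h1]
    rw [Finset.sum_update_of_mem (Finset.mem_univ j)]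
    have h2 : s = (y j)^2 + ∑ i ∈ Finset.univ \ {j}, (y i)^2 := by
      rw [hs_def, ← Finset.sum_update_of_mem (Finset.mem_univ j)]
      congr 1
      ext i
      by_cases hij : i = j
      · subst hij; simp
      · simp [Function.update_of_ne hij]
    linarith
  simp only [hupd]
  -- y-derivatives
  have e3 : ∀ j : Fin (n-1),
      deriv (deriv (fun r => ((x + b * (s - (y j)^2 + r^2)) * (s - (y j)^2 + r^2))⁻¹)) (y j)
      = ((y j)^2 * (8*(x+2*b*s)^2 - 8*b*((x+b*s)*s)) - (2*x+4*b*s)*((x+b*s)*s))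
          / ((x + b*s)*s)^3 := by
    intro j
    set a : ℝ := s - (y j)^2 with ha_def
    have hr2 : ∀ r : ℝ, HasDerivAt (fun r : ℝ => a + r^2) (2*r) r := by
      intro r
      simpa using (hasDerivAt_pow 2 r).const_add a
    have hu : ∀ r : ℝ, HasDerivAt (fun r => x + b * (a + r^2)) (b*(2*r)) r := by
      intro r
      exact ((hr2 r).const_mul b).const_add x
    have hG : ∀ r : ℝ, HasDerivAt (fun r => (x + b * (a + r^2)) * (a + r^2))
        (b*(2*r) * (a + r^2) + (x + b * (a + r^2)) * (2*r)) r := by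
      intro r
      exact (hu r).mul (hr2 r)
    have hdG : ∀ r : ℝ, HasDerivAt
        (fun r => b*(2*r) * (a + r^2) + (x + b * (a + r^2)) * (2*r))
        ((b*2) * (a + r^2) + b*(2*r)*(2*r) + (b*(2*r) * (2*r) + (x + b * (a + r^2)) * 2)) r := by
      intro r
      have t1 : HasDerivAt (fun r : ℝ => b*(2*r)) (b*2) r := by
        simpa using ((hasDerivAt_id r).const_mul 2).const_mul b
      have t2 : HasDerivAt (fun r : ℝ => (2:ℝ)*r) 2 r := by
        simpa using (hasDerivAt_id r).const_mul 2
      exact ((t1.mul (hr2 r)).add ((hu r).mul t2))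
    have hGy : (x + b * (a + (y j)^2)) * (a + (y j)^2) ≠ 0 := by
      rw [ha_def]
      have : s - (y j)^2 + (y j)^2 = s := by ring
      rw [this]
      exact hPne
    have := deriv2_inv hG hdG hGy
    rw [this]
    have hval : a + (y j)^2 = s := by rw [ha_def]; ring
    rw [hval]
    rw [div_eq_div_iff (by positivity) (by positivity)]
    ring
  rw [Finset.sum_congr rfl (fun j _ => e3 j), e1, e2]
  -- sum over j
  set m : ℝ := ((n-1 : ℕ) : ℝ) with hm_def
  have hm : (1:ℝ) ≤ m := by
    rw [hm_def]
    have : 1 ≤ n - 1 := by omega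
    exact_mod_cast this
  have hsum : ∑ j : Fin (n-1), ((y j)^2 * (8*(x+2*b*s)^2 - 8*b*((x+b*s)*s))
        - (2*x+4*b*s)*((x+b*s)*s)) / ((x + b*s)*s)^3
      = (s * (8*(x+2*b*s)^2 - 8*b*((x+b*s)*s))
        - m * ((2*x+4*b*s)*((x+b*s)*s))) / ((x + b*s)*s)^3 := by
    rw [← Finset.sum_div]
    congr 1
    rw [Finset.sum_sub_distrib, ← Finset.sum_mul, Finset.sum_const, Finset.card_univ,
      Fintype.card_fin, nsmul_eq_mul, ← hs_def, ← hm_def]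
  rw [hsum]
  -- bound the rpow term
  have hbv : b * (40 + v) = v := by
    rw [hb_def]; field_simp
  have hsbs : sb * s ≤ Real.sqrt ((x + b*s)*s) := by
    rw [Real.le_sqrt (by positivity) (by positivity)]
    nlinarith [mul_nonneg hx hspos.le, hsb2, sq_nonneg (sb*s)]
  have hsqrtpos : 0 < Real.sqrt ((x + b*s)*s) := Real.sqrt_pos.mpr hP
  have h32 : (((x + b*s)*s)⁻¹ : ℝ) ^ ((3:ℝ)/2)
      = ((x + b*s)*s)⁻¹ * (Real.sqrt ((x + b*s)*s))⁻¹ := by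
    rw [show (3:ℝ)/2 = 1 + 1/2 by norm_num,
      Real.rpow_add (by positivity), Real.rpow_one, ← Real.sqrt_eq_rpow, Real.sqrt_inv]
  have hrpow : c * (((x + b*s)*s)⁻¹ : ℝ) ^ ((3:ℝ)/2)
      ≤ (v/8 * ((x+b*s)^2*s)) / ((x + b*s)*s)^3 := by
    rw [h32]
    have h1 : (Real.sqrt ((x + b*s)*s))⁻¹ ≤ (sb * s)⁻¹ :=
      inv_anti₀ (by positivity) hsbs
    have h2 : c * (((x + b*s)*s)⁻¹ * (Real.sqrt ((x + b*s)*s))⁻¹)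
        ≤ c * (((x + b*s)*s)⁻¹ * (sb * s)⁻¹) := by
      apply mul_le_mul_of_nonneg_left _ hc.le
      exact mul_le_mul_of_nonneg_left h1 (by positivity)
    refine h2.trans (le_of_eq ?_)
    rw [hc_def]
    field_simp
  -- the key polynomial inequality
  have hbv' : 40*b + b*v = v := by linear_combination hbv
  have hposv : (0:ℝ) < v - 20*b - v*b/8 := by
    have h1 : 0 < b*v := mul_pos hb hv
    linarith
  have ht1 : (0:ℝ) ≤ (18 + v/4 + 2/b) * (x^2*s) := by positivity
  have ht2 : (0:ℝ) ≤ (6*b + v + v*b/8) * (x*s^2) := by positivity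
  have ht3 : (0:ℝ) < ((v - 20*b - v*b/8)*b) * s^3 := by positivity
  have ht4 : (0:ℝ) ≤ (m-1) * ((2*x+4*b*s)*((x+b*s)*s)) := by
    apply mul_nonneg (by linarith) (by positivity)
  have expand : C*x*((x+b*s)*s)
      - (x*(2*s^2 - 0*((x+b*s)*s))
        + (s * (8*(x+2*b*s)^2 - 8*b*((x+b*s)*s)) - m * ((2*x+4*b*s)*((x+b*s)*s)))
        + v*(-s*((x+b*s)*s)) + v/8 * ((x+b*s)^2*s))
      = (18 + v/4 + 2/b) * (x^2*s) + (6*b + v + v*b/8) * (x*s^2)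
        + ((v - 20*b - v*b/8)*b) * s^3
        + (m-1) * ((2*x+4*b*s)*((x+b*s)*s)) := by
    rw [hC_def]
    field_simp
    ring
  have key : x*(2*s^2 - 0*((x+b*s)*s))
        + (s * (8*(x+2*b*s)^2 - 8*b*((x+b*s)*s)) - m * ((2*x+4*b*s)*((x+b*s)*s)))
        + v*(-s*((x+b*s)*s)) + v/8 * ((x+b*s)^2*s)
      < C*x*((x+b*s)*s) := by linarith
  -- put everything together
  have hP3 : (0:ℝ) < ((x + b*s)*s)^3 := by positivity
  calc x * ((2*s^2 - 0*((x+b*s)*s))/((x + b*s)*s)^3)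
        + (s * (8*(x+2*b*s)^2 - 8*b*((x+b*s)*s))
          - m * ((2*x+4*b*s)*((x+b*s)*s))) / ((x + b*s)*s)^3
        + v * (-s / ((x + b*s)*s)^2)
        + c * (((x + b*s)*s)⁻¹ : ℝ) ^ ((3:ℝ)/2)
      ≤ x * ((2*s^2 - 0*((x+b*s)*s))/((x + b*s)*s)^3)
        + (s * (8*(x+2*b*s)^2 - 8*b*((x+b*s)*s))
          - m * ((2*x+4*b*s)*((x+b*s)*s))) / ((x + b*s)*s)^3
        + v * (-s / ((x + b*s)*s)^2)
        + (v/8 * ((x+b*s)^2*s)) / ((x + b*s)*s)^3 := by linarith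
    _ = (x*(2*s^2 - 0*((x+b*s)*s))
        + (s * (8*(x+2*b*s)^2 - 8*b*((x+b*s)*s)) - m * ((2*x+4*b*s)*((x+b*s)*s)))
        + v*(-s*((x+b*s)*s)) + v/8 * ((x+b*s)^2*s)) / ((x + b*s)*s)^3 := by
        field_simp
    _ < (C*x*((x+b*s)*s)) / ((x + b*s)*s)^3 := by
        exact (div_lt_div_iff_of_pos_right hP3).mpr key
    _ = C * x * (((x + b*s)*s)⁻¹)^2 := by
        field_simp
end

section
/- Given v > 0, there exist b, c, C > 0 (b small depending on v, then c small, then C large) such that for all x ≥ 0 and y ∈ ℝ^{n−1} with 0 < |y|² and y in the box 0 < y_i < 2: 2x|y|² + (10−2n+c b^{−1/2})(x+b|y|²)² + (10−2n)b(x+b|y|²)|y|² + 8b²|y|⁴ < v(x+b|y|²)|y|² + Cx(x+b|y|²), where |y|² = Σ_{i=2}^n y_i². -/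
lemma key_quad (n : ℕ) (hn : 2 ≤ n) (v x s : ℝ) (hv : 0 < v)
    (hx : 0 ≤ x) (hs : 0 < s) :
    2*x*s + (11 - 2*(n:ℝ)) * (x + (v/22)*s)^2
      + (10 - 2*(n:ℝ)) * (v/22) * (x + (v/22)*s) * s
      + 8*(v/22)^2*s^2
    < v*(x + (v/22)*s)*s + (484/v + 22)*x*(x + (v/22)*s) := by
  have hn' : (2:ℝ) ≤ (n:ℝ) := by exact_mod_cast hn
  have h1 : 0 ≤ x * s := mul_nonneg hx hs.le
  have h2 : 0 ≤ x^2 := sq_nonneg x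
  have h3 : 0 < s^2 := by positivity
  have hC : (484/v + 22) * v = 484 + 22*v := by field_simp
  have hCx : (484/v + 22)*x*(x + (v/22)*s) * 22 * v
      = (484 + 22*v) * x * (22 * x + v * s) := by
    rw [mul_comm ((484/v + 22)*x*(x + (v/22)*s)) 22, mul_assoc]
    field_simp
  nlinarith [mul_pos hv h3, mul_nonneg (mul_nonneg hv.le hv.le) h1,
    mul_nonneg hv.le h1, mul_nonneg hv.le h2,
    mul_nonneg (mul_nonneg hv.le hv.le) h2,
    mul_nonneg (mul_nonneg (sub_nonneg.2 hn') hv.le) h1,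
    mul_nonneg (mul_nonneg (mul_nonneg (sub_nonneg.2 hn') hv.le) hv.le) h3.le,
    mul_nonneg (mul_nonneg (sub_nonneg.2 hn') hv.le) h2,
    mul_pos (mul_pos hv hv) h3, sq_nonneg (x - s), sq_nonneg (x + s)]

/-- The key algebraic inequality in the barrier construction. -/
theorem stmt_11 (n : ℕ) (hn : 2 ≤ n) (v : ℝ) (hv : 0 < v) :
    ∃ b c C : ℝ, 0 < b ∧ 0 < c ∧ 0 < C ∧
      ∀ (x : ℝ) (y : Fin (n-1) → ℝ), 0 ≤ x → (∀ i, 0 < y i ∧ y i < 2) →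
        0 < ∑ i, (y i)^2 →
        2*x*(∑ i, (y i)^2)
          + (10 - 2*(n:ℝ) + c * b ^ (-(1:ℝ)/2)) * (x + b * ∑ i, (y i)^2)^2
          + (10 - 2*(n:ℝ)) * b * (x + b * ∑ i, (y i)^2) * (∑ i, (y i)^2)
          + 8*b^2*(∑ i, (y i)^2)^2
        < v*(x + b * ∑ i, (y i)^2)*(∑ i, (y i)^2) + C*x*(x + b * ∑ i, (y i)^2) := by
  have hb : (0:ℝ) < v/22 := by positivity
  refine ⟨v/22, Real.sqrt (v/22), 484/v + 22, hb, Real.sqrt_pos.2 hb, by positivity, ?_⟩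
  intro x y hx _ hs
  have hc1 : Real.sqrt (v/22) * (v/22) ^ (-(1:ℝ)/2) = 1 := by
    rw [Real.sqrt_eq_rpow, ← Real.rpow_add hb]
    norm_num
  rw [hc1]
  have h10 : (10 : ℝ) - 2*(n:ℝ) + 1 = 11 - 2*(n:ℝ) := by ring
  rw [h10]
  exact key_quad n hn v x _ hv hx hs
end

section
/- Let f be a smooth solution of f_t = x f_{xx} + Σ_{i=2}^n f_{y_iy_i} + v f_x and set X = (A+f²) f_x². Then X_t = x X_{xx} + Σ X_{y_iy_i} + (v+1) X_x − [2x(A+f²)f_{xx}² + 8x f f_x² f_{xx} + 2x f_x⁴ + 2 f f_x³ + Σ_{i=2}^n (2(A+f²) f_{xy_i}² + 8 f f_x f_{y_i} f_{xy_i} + 2 f_x² f_{y_i}²)]. -/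
open Filter Set

/-- Partial derivative in x. -/
noncomputable def pX {m : ℕ} (F : ℝ → (Fin m → ℝ) → ℝ → ℝ) : ℝ → (Fin m → ℝ) → ℝ → ℝ :=
  fun x y t => deriv (fun x' => F x' y t) x

/-- Partial derivative in y_i. -/
noncomputable def pY {m : ℕ} (i : Fin m) (F : ℝ → (Fin m → ℝ) → ℝ → ℝ) :
    ℝ → (Fin m → ℝ) → ℝ → ℝ :=
  fun x y t => deriv (fun r => F x (Function.update y i r) t) (y i)

/-- Partial derivative in t. -/
noncomputable def pT {m : ℕ} (F : ℝ → (Fin m → ℝ) → ℝ → ℝ) : ℝ → (Fin m → ℝ) → ℝ → ℝ :=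
  fun x y t => deriv (fun t' => F x y t') t


namespace Stmt13Aux

variable {m : ℕ}

abbrev EE (m : ℕ) := ℝ × (Fin m → ℝ) × ℝ

noncomputable def D (w : EE m) (F : EE m → ℝ) : EE m → ℝ := fun p => fderiv ℝ F p w

def unc (f : ℝ → (Fin m → ℝ) → ℝ → ℝ) : EE m → ℝ := fun p => f p.1 p.2.1 p.2.2

def ex : EE m := (1, 0, 0)
def et : EE m := (0, 0, 1)
def ey (i : Fin m) : EE m := (0, Pi.single i 1, 0)

lemma cdiff {F : EE m → ℝ} (h : ContDiff ℝ (⊤ : ℕ∞) F) (p : EE m) : DifferentiableAt ℝ F p :=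
  h.differentiable (by simp) p

lemma D_contDiff {F : EE m → ℝ} (hF : ContDiff ℝ (⊤ : ℕ∞) F) (w : EE m) : ContDiff ℝ (⊤ : ℕ∞) (D w F) :=
  (ContinuousLinearMap.apply ℝ ℝ w).contDiff.comp (hF.fderiv_right (by simp))

lemma D_congr {F G : EE m → ℝ} {p : EE m} (h : F =ᶠ[nhds p] G) (w : EE m) :
    D w F p = D w G p := by unfold D; rw [h.fderiv_eq]

lemma D_add {F G : EE m → ℝ} {p : EE m} (hF : DifferentiableAt ℝ F p)
    (hG : DifferentiableAt ℝ G p) (w : EE m) :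
    D w (fun q => F q + G q) p = D w F p + D w G p := by
  unfold D; rw [fderiv_fun_add hF hG]; simp

lemma D_const (c : ℝ) (w : EE m) (p : EE m) : D w (fun _ => c) p = 0 := by simp [D]

lemma D_const_mul {F : EE m → ℝ} {p : EE m} (hF : DifferentiableAt ℝ F p) (c : ℝ) (w : EE m) :
    D w (fun q => c * F q) p = c * D w F p := by
  unfold D; rw [fderiv_const_mul hF]; simp

lemma D_mul {F G : EE m → ℝ} {p : EE m} (hF : DifferentiableAt ℝ F p)
    (hG : DifferentiableAt ℝ G p) (w : EE m) :
    D w (fun q => F q * G q) p = D w F p * G p + F p * D w G p := by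
  unfold D; rw [fderiv_fun_mul hF hG]; simp [smul_eq_mul]; ring

lemma D_pow {F : EE m → ℝ} {p : EE m} (hF : DifferentiableAt ℝ F p) (w : EE m) :
    D w (fun q => F q ^ 2) p = 2 * F p * D w F p := by
  have : (fun q => F q ^ 2) = fun q => F q * F q := by ext q; ring
  rw [this, D_mul hF hF]; ring

lemma D_fst (w p : EE m) : D w (fun q : EE m => q.1) p = w.1 := by
  have : HasFDerivAt (fun q : EE m => q.1) (ContinuousLinearMap.fst ℝ ℝ ((Fin m → ℝ) × ℝ)) p :=
    hasFDerivAt_fst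
  simp [D, this.fderiv]

lemma D_sum {ι : Type*} (s : Finset ι) (G : ι → EE m → ℝ) {p : EE m}
    (h : ∀ i ∈ s, DifferentiableAt ℝ (G i) p) (w : EE m) :
    D w (fun q => ∑ i ∈ s, G i q) p = ∑ i ∈ s, D w (G i) p := by
  unfold D; rw [fderiv_fun_sum h]; simp

lemma D_app {F : EE m → ℝ} (hF : ContDiff ℝ (⊤ : ℕ∞) F) (w w' p : EE m) :
    D w (D w' F) p = fderiv ℝ (fderiv ℝ F) p w w' := by
  have hd : DifferentiableAt ℝ (fderiv ℝ F) p :=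
    ((hF.fderiv_right (m := (⊤ : ℕ∞)) (by simp)).differentiable (by simp)) p
  have h2 : HasFDerivAt (D w' F)
      ((ContinuousLinearMap.apply ℝ ℝ w').comp (fderiv ℝ (fderiv ℝ F) p)) p :=
    (ContinuousLinearMap.apply ℝ ℝ w').hasFDerivAt.comp p hd.hasFDerivAt
  show fderiv ℝ (D w' F) p w = _
  rw [h2.fderiv]; rfl

lemma D_comm {F : EE m → ℝ} (hF : ContDiff ℝ (⊤ : ℕ∞) F) (w w' p : EE m) :
    D w (D w' F) p = D w' (D w F) p := by
  rw [D_app hF, D_app hF]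
  exact (hF.contDiffAt.isSymmSndFDerivAt (by rw [minSmoothness_of_isRCLikeNormedField]; exact WithTop.coe_le_coe.2 (le_top : (2 : ℕ∞) ≤ ⊤))) w w'

/-! ### Translation of the curried partial derivatives -/

lemma pX_eq {f : ℝ → (Fin m → ℝ) → ℝ → ℝ} (hf : ContDiff ℝ (⊤ : ℕ∞) (unc f)) (x : ℝ)
    (y : Fin m → ℝ) (t : ℝ) : pX f x y t = D ex (unc f) (x, y, t) := by
  have hline : HasDerivAt (fun x' : ℝ => ((x', y, t) : EE m)) ex x :=
    (hasDerivAt_id x).prodMk (hasDerivAt_const x (y, t))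
  exact ((hf.differentiable (by simp) (x, y, t)).hasFDerivAt.comp_hasDerivAt x hline).deriv

lemma pT_eq {f : ℝ → (Fin m → ℝ) → ℝ → ℝ} (hf : ContDiff ℝ (⊤ : ℕ∞) (unc f)) (x : ℝ)
    (y : Fin m → ℝ) (t : ℝ) : pT f x y t = D et (unc f) (x, y, t) := by
  have hline : HasDerivAt (fun t' : ℝ => ((x, y, t') : EE m)) et t :=
    (hasDerivAt_const t x).prodMk ((hasDerivAt_const t y).prodMk (hasDerivAt_id t))
  exact ((hf.differentiable (by simp) (x, y, t)).hasFDerivAt.comp_hasDerivAt t hline).deriv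

lemma pY_eq {f : ℝ → (Fin m → ℝ) → ℝ → ℝ} (hf : ContDiff ℝ (⊤ : ℕ∞) (unc f)) (i : Fin m) (x : ℝ)
    (y : Fin m → ℝ) (t : ℝ) : pY i f x y t = D (ey i) (unc f) (x, y, t) := by
  have hline : HasDerivAt (fun r : ℝ => ((x, Function.update y i r, t) : EE m)) (ey i) (y i) :=
    (hasDerivAt_const (y i) x).prodMk
      ((hasDerivAt_update y i (y i)).prodMk (hasDerivAt_const (y i) t))
  have h := ((hf.differentiable (by simp)
      (x, Function.update y i (y i), t)).hasFDerivAt.comp_hasDerivAt (y i) hline).deriv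
  rw [Function.update_eq_self] at h
  exact h

lemma unc_pX {f : ℝ → (Fin m → ℝ) → ℝ → ℝ} (hf : ContDiff ℝ (⊤ : ℕ∞) (unc f)) :
    unc (pX f) = D ex (unc f) :=
  funext fun q => pX_eq hf q.1 q.2.1 q.2.2

lemma unc_pY {f : ℝ → (Fin m → ℝ) → ℝ → ℝ} (hf : ContDiff ℝ (⊤ : ℕ∞) (unc f)) (i : Fin m) :
    unc (pY i f) = D (ey i) (unc f) :=
  funext fun q => pY_eq hf i q.1 q.2.1 q.2.2

/-! ### Derivative formulas for `X = (A+F²)·(D ex F)²` -/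

lemma DX_formula {F : EE m → ℝ} (hF : ContDiff ℝ (⊤ : ℕ∞) F) (A : ℝ) (w p : EE m) :
    D w (fun q => (A + F q ^ 2) * (D ex F q) ^ 2) p
      = 2 * F p * D w F p * (D ex F p) ^ 2
        + (A + F p ^ 2) * (2 * D ex F p * D w (D ex F) p) := by
  have hg : ContDiff ℝ (⊤ : ℕ∞) (D ex F) := D_contDiff hF ex
  have h1 : DifferentiableAt ℝ (fun q => A + F q ^ 2) p :=
    cdiff ((contDiff_const (c := A)).add (hF.pow 2)) p
  have h2 : DifferentiableAt ℝ (fun q => (D ex F q) ^ 2) p := cdiff (hg.pow 2) p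
  rw [D_mul h1 h2, D_pow (cdiff hg p)]
  have h3 : D w (fun q => A + F q ^ 2) p = 2 * F p * D w F p := by
    rw [D_add (differentiableAt_const A) (cdiff (hF.pow 2) p), D_const, D_pow (cdiff hF p)]
    ring
  rw [h3]

lemma DDX_formula {F : EE m → ℝ} (hF : ContDiff ℝ (⊤ : ℕ∞) F) (A : ℝ) (w w' p : EE m) :
    D w' (D w (fun q => (A + F q ^ 2) * (D ex F q) ^ 2)) p
      = 2 * D w' F p * D w F p * (D ex F p) ^ 2
        + 2 * F p * D w' (D w F) p * (D ex F p) ^ 2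
        + 4 * F p * D w F p * D ex F p * D w' (D ex F) p
        + 4 * F p * D w' F p * D ex F p * D w (D ex F) p
        + (A + F p ^ 2) * (2 * D w' (D ex F) p * D w (D ex F) p
            + 2 * D ex F p * D w' (D w (D ex F)) p) := by
  have hg : ContDiff ℝ (⊤ : ℕ∞) (D ex F) := D_contDiff hF ex
  have hDwF : ContDiff ℝ (⊤ : ℕ∞) (D w F) := D_contDiff hF w
  have hDwg : ContDiff ℝ (⊤ : ℕ∞) (D w (D ex F)) := D_contDiff hg w
  have hrw : D w (fun q => (A + F q ^ 2) * (D ex F q) ^ 2)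
      = fun q => (2 * F q * D w F q) * (D ex F q) ^ 2
          + (A + F q ^ 2) * (2 * D ex F q * D w (D ex F) q) := by
    funext q
    rw [DX_formula hF A w q]
  rw [hrw]
  have d2F : DifferentiableAt ℝ (fun q => 2 * F q) p := cdiff (contDiff_const.mul hF) p
  have dF : DifferentiableAt ℝ F p := cdiff hF p
  have dDwF : DifferentiableAt ℝ (D w F) p := cdiff hDwF p
  have dg : DifferentiableAt ℝ (D ex F) p := cdiff hg p
  have dDwg : DifferentiableAt ℝ (D w (D ex F)) p := cdiff hDwg p
  have dA : DifferentiableAt ℝ (fun q => A + F q ^ 2) p :=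
    cdiff ((contDiff_const (c := A)).add (hF.pow 2)) p
  have dT1a : DifferentiableAt ℝ (fun q => 2 * F q * D w F q) p :=
    cdiff ((contDiff_const.mul hF).mul hDwF) p
  have dT1 : DifferentiableAt ℝ (fun q => 2 * F q * D w F q * (D ex F q) ^ 2) p :=
    cdiff (((contDiff_const.mul hF).mul hDwF).mul (hg.pow 2)) p
  have dg2 : DifferentiableAt ℝ (fun q => (D ex F q) ^ 2) p := cdiff (hg.pow 2) p
  have dT2b : DifferentiableAt ℝ (fun q => 2 * D ex F q * D w (D ex F) q) p :=
    cdiff ((contDiff_const.mul hg).mul hDwg) p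
  have dT2 : DifferentiableAt ℝ (fun q => (A + F q ^ 2) * (2 * D ex F q * D w (D ex F) q)) p :=
    cdiff (((contDiff_const (c := A)).add (hF.pow 2)).mul ((contDiff_const.mul hg).mul hDwg)) p
  rw [D_add dT1 dT2, D_mul dT1a dg2, D_mul d2F dDwF, D_const_mul dF,
    D_pow dg, D_mul dA dT2b, D_add (differentiableAt_const A) (cdiff (hF.pow 2) p),
    D_const, D_pow dF, D_mul (cdiff (contDiff_const.mul hg) p) dDwg, D_const_mul (cdiff hg p)]
  ring

lemma Dtg_formula {F : EE m → ℝ} (hF : ContDiff ℝ (⊤ : ℕ∞) F) {v : ℝ}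
    (heq' : ∀ q : EE m, 0 ≤ q.1 → D et F q
      = q.1 * D ex (D ex F) q + (∑ i, D (ey i) (D (ey i) F) q) + v * D ex F q)
    {p : EE m} (hp : 0 < p.1) :
    D et (D ex F) p = (v + 1) * D ex (D ex F) p + p.1 * D ex (D ex (D ex F)) p
      + ∑ i, D (ey i) (D (ey i) (D ex F)) p := by
  have hg : ContDiff ℝ (⊤ : ℕ∞) (D ex F) := D_contDiff hF ex
  have hgg : ContDiff ℝ (⊤ : ℕ∞) (D ex (D ex F)) := D_contDiff hg ex
  set Φ : EE m → ℝ := fun q =>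
    q.1 * D ex (D ex F) q + (∑ i, D (ey i) (D (ey i) F) q) + v * D ex F q with hΦ
  have hmem : {q : EE m | 0 < q.1} ∈ nhds p :=
    (isOpen_lt continuous_const continuous_fst).mem_nhds hp
  have hev : D et F =ᶠ[nhds p] Φ :=
    Filter.eventually_of_mem hmem (fun q hq => heq' q (le_of_lt hq))
  have h1 : D et (D ex F) p = D ex (D et F) p := D_comm hF et ex p
  rw [h1, D_congr hev ex]
  have dT1 : DifferentiableAt ℝ (fun q : EE m => q.1 * D ex (D ex F) q) p :=
    cdiff (contDiff_fst.mul hgg) p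
  have dT2 : DifferentiableAt ℝ (fun q : EE m => ∑ i, D (ey i) (D (ey i) F) q) p := by
    apply DifferentiableAt.fun_sum
    intro i _
    exact cdiff (D_contDiff (D_contDiff hF (ey i)) (ey i)) p
  have dT3 : DifferentiableAt ℝ (fun q : EE m => v * D ex F q) p :=
    cdiff (contDiff_const.mul hg) p
  rw [show Φ = fun q => ((fun q : EE m => q.1 * D ex (D ex F) q) q
      + (fun q : EE m => ∑ i, D (ey i) (D (ey i) F) q) q)
      + (fun q : EE m => v * D ex F q) q from rfl]
  rw [D_add (dT1.fun_add dT2) dT3, D_add dT1 dT2,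
    D_mul (differentiable_fst.differentiableAt) (cdiff hgg p), D_fst,
    D_const_mul (cdiff hg p), D_sum Finset.univ _
      (fun i _ => cdiff (D_contDiff (D_contDiff hF (ey i)) (ey i)) p)]
  have hswap : ∀ i : Fin m, D ex (D (ey i) (D (ey i) F)) p
      = D (ey i) (D (ey i) (D ex F)) p := by
    intro i
    rw [D_comm (D_contDiff hF (ey i)) ex (ey i) p]
    congr 1
    funext q
    exact D_comm hF ex (ey i) q
  rw [Finset.sum_congr rfl (fun i _ => hswap i)]
  show ex.1 * D ex (D ex F) p + p.1 * D ex (D ex (D ex F)) p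
      + (∑ i, D (ey i) (D (ey i) (D ex F)) p) + v * D ex (D ex F) p = _
  have hx1 : (ex : EE m).1 = 1 := rfl
  rw [hx1]; ring

/-! ### The main pointwise identity, at interior points -/

lemma main {F : EE m → ℝ} (hF : ContDiff ℝ (⊤ : ℕ∞) F) (v A : ℝ)
    (heq' : ∀ q : EE m, 0 ≤ q.1 → D et F q
      = q.1 * D ex (D ex F) q + (∑ i, D (ey i) (D (ey i) F) q) + v * D ex F q)
    (p : EE m) (hp : 0 < p.1) :
    D et (fun q => (A + F q ^ 2) * (D ex F q) ^ 2) p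
      = p.1 * D ex (D ex (fun q => (A + F q ^ 2) * (D ex F q) ^ 2)) p
        + (∑ i, D (ey i) (D (ey i) (fun q => (A + F q ^ 2) * (D ex F q) ^ 2)) p)
        + (v + 1) * D ex (fun q => (A + F q ^ 2) * (D ex F q) ^ 2) p
        - (2 * p.1 * (A + F p ^ 2) * (D ex (D ex F) p) ^ 2
           + 8 * p.1 * F p * (D ex F p) ^ 2 * D ex (D ex F) p
           + 2 * p.1 * (D ex F p) ^ 4
           + 2 * F p * (D ex F p) ^ 3
           + ∑ i, (2 * (A + F p ^ 2) * (D (ey i) (D ex F) p) ^ 2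
               + 8 * F p * D ex F p * D (ey i) F p * D (ey i) (D ex F) p
               + 2 * (D ex F p) ^ 2 * (D (ey i) F p) ^ 2)) := by
  have hBig : (∑ i, D (ey i) (D (ey i) (fun q => (A + F q ^ 2) * (D ex F q) ^ 2)) p)
      = (∑ i, (2 * (A + F p ^ 2) * (D (ey i) (D ex F) p) ^ 2
            + 8 * F p * D ex F p * D (ey i) F p * D (ey i) (D ex F) p
            + 2 * (D ex F p) ^ 2 * (D (ey i) F p) ^ 2))
        + ((2 * F p * (D ex F p) ^ 2) * (∑ i, D (ey i) (D (ey i) F) p)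
        + (2 * (A + F p ^ 2) * D ex F p) * (∑ i, D (ey i) (D (ey i) (D ex F)) p)) := by
    have h1 : ∀ i : Fin m,
        D (ey i) (D (ey i) (fun q => (A + F q ^ 2) * (D ex F q) ^ 2)) p
          = (2 * (A + F p ^ 2) * (D (ey i) (D ex F) p) ^ 2
              + 8 * F p * D ex F p * D (ey i) F p * D (ey i) (D ex F) p
              + 2 * (D ex F p) ^ 2 * (D (ey i) F p) ^ 2)
            + ((2 * F p * (D ex F p) ^ 2) * D (ey i) (D (ey i) F) p
              + (2 * (A + F p ^ 2) * D ex F p) * D (ey i) (D (ey i) (D ex F)) p) := by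
      intro i
      rw [DDX_formula hF A (ey i) (ey i) p]
      ring
    rw [Finset.sum_congr rfl (fun i _ => h1 i)]
    simp only [Finset.sum_add_distrib, Finset.mul_sum]
  rw [DX_formula hF A et p, heq' p hp.le, Dtg_formula hF heq' hp,
    DDX_formula hF A ex ex p, DX_formula hF A ex p, hBig]
  ring


/-! ### Extension to the boundary by continuity -/

lemma main' {F : EE m → ℝ} (hF : ContDiff ℝ (⊤ : ℕ∞) F) (v A : ℝ)
    (heq' : ∀ q : EE m, 0 ≤ q.1 → D et F q
      = q.1 * D ex (D ex F) q + (∑ i, D (ey i) (D (ey i) F) q) + v * D ex F q)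
    (p : EE m) (hp : 0 ≤ p.1) :
    D et (fun q => (A + F q ^ 2) * (D ex F q) ^ 2) p
      = p.1 * D ex (D ex (fun q => (A + F q ^ 2) * (D ex F q) ^ 2)) p
        + (∑ i, D (ey i) (D (ey i) (fun q => (A + F q ^ 2) * (D ex F q) ^ 2)) p)
        + (v + 1) * D ex (fun q => (A + F q ^ 2) * (D ex F q) ^ 2) p
        - (2 * p.1 * (A + F p ^ 2) * (D ex (D ex F) p) ^ 2
           + 8 * p.1 * F p * (D ex F p) ^ 2 * D ex (D ex F) p
           + 2 * p.1 * (D ex F p) ^ 4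
           + 2 * F p * (D ex F p) ^ 3
           + ∑ i, (2 * (A + F p ^ 2) * (D (ey i) (D ex F) p) ^ 2
               + 8 * F p * D ex F p * D (ey i) F p * D (ey i) (D ex F) p
               + 2 * (D ex F p) ^ 2 * (D (ey i) F p) ^ 2)) := by
  obtain ⟨x, y, t⟩ := p
  simp only at hp ⊢
  have hX : ContDiff ℝ (⊤ : ℕ∞) (fun q : EE m => (A + F q ^ 2) * (D ex F q) ^ 2) :=
    ((contDiff_const (c := A)).add (hF.pow 2)).mul ((D_contDiff hF ex).pow 2)
  have hl : Continuous (fun s : ℝ => ((s, y, t) : EE m)) :=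
    continuous_id.prodMk continuous_const
  have cL : Continuous (fun s : ℝ =>
      D et (fun q : EE m => (A + F q ^ 2) * (D ex F q) ^ 2) (s, y, t)) :=
    (D_contDiff hX et).continuous.comp hl
  have c1 : Continuous (fun s : ℝ =>
      D ex (D ex (fun q : EE m => (A + F q ^ 2) * (D ex F q) ^ 2)) (s, y, t)) :=
    (D_contDiff (D_contDiff hX ex) ex).continuous.comp hl
  have c2 : ∀ i : Fin m, Continuous (fun s : ℝ =>
      D (ey i) (D (ey i) (fun q : EE m => (A + F q ^ 2) * (D ex F q) ^ 2)) (s, y, t)) :=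
    fun i => (D_contDiff (D_contDiff hX (ey i)) (ey i)).continuous.comp hl
  have c3 : Continuous (fun s : ℝ =>
      D ex (fun q : EE m => (A + F q ^ 2) * (D ex F q) ^ 2) (s, y, t)) :=
    (D_contDiff hX ex).continuous.comp hl
  have cF : Continuous (fun s : ℝ => F (s, y, t)) := hF.continuous.comp hl
  have cg : Continuous (fun s : ℝ => D ex F (s, y, t)) :=
    (D_contDiff hF ex).continuous.comp hl
  have cgg : Continuous (fun s : ℝ => D ex (D ex F) (s, y, t)) :=
    (D_contDiff (D_contDiff hF ex) ex).continuous.comp hl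
  have cfi : ∀ i : Fin m, Continuous (fun s : ℝ => D (ey i) F (s, y, t)) :=
    fun i => (D_contDiff hF (ey i)).continuous.comp hl
  have cgi : ∀ i : Fin m, Continuous (fun s : ℝ => D (ey i) (D ex F) (s, y, t)) :=
    fun i => (D_contDiff (D_contDiff hF ex) (ey i)).continuous.comp hl
  have cR : Continuous (fun s : ℝ =>
      s * D ex (D ex (fun q : EE m => (A + F q ^ 2) * (D ex F q) ^ 2)) (s, y, t)
        + (∑ i, D (ey i) (D (ey i) (fun q : EE m => (A + F q ^ 2) * (D ex F q) ^ 2)) (s, y, t))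
        + (v + 1) * D ex (fun q : EE m => (A + F q ^ 2) * (D ex F q) ^ 2) (s, y, t)
        - (2 * s * (A + F (s, y, t) ^ 2) * (D ex (D ex F) (s, y, t)) ^ 2
           + 8 * s * F (s, y, t) * (D ex F (s, y, t)) ^ 2 * D ex (D ex F) (s, y, t)
           + 2 * s * (D ex F (s, y, t)) ^ 4
           + 2 * F (s, y, t) * (D ex F (s, y, t)) ^ 3
           + ∑ i, (2 * (A + F (s, y, t) ^ 2) * (D (ey i) (D ex F) (s, y, t)) ^ 2
               + 8 * F (s, y, t) * D ex F (s, y, t) * D (ey i) F (s, y, t)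
                   * D (ey i) (D ex F) (s, y, t)
               + 2 * (D ex F (s, y, t)) ^ 2 * (D (ey i) F (s, y, t)) ^ 2))) := by
    apply Continuous.sub
    · exact ((continuous_id.mul c1).add
        (continuous_finset_sum _ fun i _ => c2 i)).add (continuous_const.mul c3)
    · apply Continuous.add
      · apply Continuous.add
        · apply Continuous.add
          · apply Continuous.add
            · exact ((continuous_const.mul continuous_id).mul
                (continuous_const.add (cF.pow 2))).mul (cgg.pow 2)
            · exact (((continuous_const.mul continuous_id).mul cF).mul (cg.pow 2)).mul cgg
          · exact (continuous_const.mul continuous_id).mul (cg.pow 4)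
        · exact (continuous_const.mul cF).mul (cg.pow 3)
      · apply continuous_finset_sum
        intro i _
        exact ((continuous_const.mul (continuous_const.add (cF.pow 2))).mul
            ((cgi i).pow 2)).add
          ((((continuous_const.mul cF).mul cg).mul (cfi i)).mul (cgi i)) |>.add
          ((continuous_const.mul (cg.pow 2)).mul ((cfi i).pow 2))
  have hEq : Set.EqOn _ _ (Ioi (0:ℝ)) := fun s hs => main hF v A heq' (s, y, t) hs
  have hcl := hEq.closure cL cR
  rw [closure_Ioi] at hcl
  exact hcl hp

end Stmt13Aux

open Stmt13Aux in
/-- Evolution equation for X = (A+f²) f_x². -/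
theorem stmt_13 (n : ℕ) (hn : 2 ≤ n) (v A : ℝ) (hv : 0 < v)
    (f : ℝ → (Fin (n-1) → ℝ) → ℝ → ℝ)
    (hf : ContDiff ℝ (⊤ : ℕ∞) (fun p : ℝ × (Fin (n-1) → ℝ) × ℝ => f p.1 p.2.1 p.2.2))
    (heq : ∀ x y t, 0 ≤ x →
      pT f x y t = x * pX (pX f) x y t + (∑ i, pY i (pY i f) x y t) + v * pX f x y t) :
    ∀ x y t, 0 ≤ x →
      pT (fun x y t => (A + (f x y t)^2) * (pX f x y t)^2) x y t
        = x * pX (pX (fun x y t => (A + (f x y t)^2) * (pX f x y t)^2)) x y t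
          + (∑ i, pY i (pY i (fun x y t => (A + (f x y t)^2) * (pX f x y t)^2)) x y t)
          + (v+1) * pX (fun x y t => (A + (f x y t)^2) * (pX f x y t)^2) x y t
          - ( 2*x*(A + (f x y t)^2)*(pX (pX f) x y t)^2
              + 8*x*(f x y t)*(pX f x y t)^2*(pX (pX f) x y t)
              + 2*x*(pX f x y t)^4
              + 2*(f x y t)*(pX f x y t)^3
              + ∑ i, ( 2*(A + (f x y t)^2)*(pY i (pX f) x y t)^2
                  + 8*(f x y t)*(pX f x y t)*(pY i f x y t)*(pY i (pX f) x y t)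
                  + 2*(pX f x y t)^2*(pY i f x y t)^2 ) ) := by
  intro x y t hx
  have hF : ContDiff ℝ (⊤ : ℕ∞) (unc f) := hf
  have hpXfs : ContDiff ℝ (⊤ : ℕ∞) (unc (pX f)) := by
    rw [unc_pX hF]; exact D_contDiff hF ex
  -- the evolution equation in uncurried form
  have heq' : ∀ q : EE (n-1), 0 ≤ q.1 → D et (unc f) q
      = q.1 * D ex (D ex (unc f)) q + (∑ i, D (ey i) (D (ey i) (unc f)) q)
        + v * D ex (unc f) q := by
    rintro ⟨a, b, c⟩ ha
    have h := heq a b c ha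
    have hXX : pX (pX f) a b c = D ex (D ex (unc f)) (a, b, c) := by
      rw [pX_eq hpXfs, unc_pX hF]
    have hYY : ∀ i, pY i (pY i f) a b c = D (ey i) (D (ey i) (unc f)) (a, b, c) := by
      intro i
      have hs : ContDiff ℝ (⊤ : ℕ∞) (unc (pY i f)) := by
        rw [unc_pY hF i]; exact D_contDiff hF (ey i)
      rw [pY_eq hs i, unc_pY hF i]
    rw [pT_eq hF, hXX, pX_eq hF] at h
    simp only [hYY] at h
    exact h
  -- translation of the goal
  have hXu : unc (fun x y t => (A + (f x y t)^2) * (pX f x y t)^2)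
      = fun q => (A + unc f q ^ 2) * (D ex (unc f) q) ^ 2 := by
    funext q
    show (A + (f q.1 q.2.1 q.2.2)^2) * (pX f q.1 q.2.1 q.2.2)^2 = _
    rw [pX_eq hF]
    rfl
  have hXt : ContDiff ℝ (⊤ : ℕ∞) (fun q : EE (n-1) => (A + unc f q ^ 2) * (D ex (unc f) q) ^ 2) :=
    ((contDiff_const (c := A)).add (hF.pow 2)).mul ((D_contDiff hF ex).pow 2)
  have hXcs : ContDiff ℝ (⊤ : ℕ∞) (unc (fun x y t => (A + (f x y t)^2) * (pX f x y t)^2)) := by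
    rw [hXu]; exact hXt
  have e1 : pT (fun x y t => (A + (f x y t)^2) * (pX f x y t)^2) x y t
      = D et (fun q => (A + unc f q ^ 2) * (D ex (unc f) q) ^ 2) (x, y, t) := by
    rw [pT_eq hXcs, hXu]
  have e2 : pX (fun x y t => (A + (f x y t)^2) * (pX f x y t)^2) x y t
      = D ex (fun q => (A + unc f q ^ 2) * (D ex (unc f) q) ^ 2) (x, y, t) := by
    rw [pX_eq hXcs, hXu]
  have e3 : pX (pX (fun x y t => (A + (f x y t)^2) * (pX f x y t)^2)) x y t
      = D ex (D ex (fun q => (A + unc f q ^ 2) * (D ex (unc f) q) ^ 2)) (x, y, t) := by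
    have hs : ContDiff ℝ (⊤ : ℕ∞) (unc (pX (fun x y t => (A + (f x y t)^2) * (pX f x y t)^2))) := by
      rw [unc_pX hXcs, hXu]; exact D_contDiff hXt ex
    rw [pX_eq hs, unc_pX hXcs, hXu]
  have e4 : ∀ i, pY i (pY i (fun x y t => (A + (f x y t)^2) * (pX f x y t)^2)) x y t
      = D (ey i) (D (ey i) (fun q => (A + unc f q ^ 2) * (D ex (unc f) q) ^ 2)) (x, y, t) := by
    intro i
    have hs : ContDiff ℝ (⊤ : ℕ∞) (unc (pY i (fun x y t => (A + (f x y t)^2) * (pX f x y t)^2))) := by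
      rw [unc_pY hXcs i, hXu]; exact D_contDiff hXt (ey i)
    rw [pY_eq hs i, unc_pY hXcs i, hXu]
  have e5 : pX f x y t = D ex (unc f) (x, y, t) := pX_eq hF x y t
  have e6 : pX (pX f) x y t = D ex (D ex (unc f)) (x, y, t) := by
    rw [pX_eq hpXfs, unc_pX hF]
  have e7 : ∀ i, pY i f x y t = D (ey i) (unc f) (x, y, t) := fun i => pY_eq hF i x y t
  have e8 : ∀ i, pY i (pX f) x y t = D (ey i) (D ex (unc f)) (x, y, t) := by
    intro i
    rw [pY_eq hpXfs i, unc_pX hF]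
  rw [e1, e3, e2, e6, e5]
  simp only [e4, e7, e8]
  exact main' hF v A heq' (x, y, t) hx
end
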